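/- Let s ≥ 1, let K be a number field of degree 3s with exactly s real embeddings and 2s complex (non-real) embeddings, with embeddings enumerated σ_1, …, σ_{3s} : K → ℂ so that σ_1, …, σ_s are the real embeddings and σ_{2s+j} = conj ∘ σ_{s+j} for j = 1, …, s. Let U ⊆ 𝓞_K^× be a subgroup which is admissible and satisfies the pluriclosed condition. Then for every subset I ⊆ {1, …, 3s}, one has ∏_{i∈I} σ_i(u) = 1 for all u ∈ U if and only if there exists a subset J ⊆ {1, …, s} such that I = ⋃_{j∈J} {j, s+j, 2s+j}. -/

import Mathlib

open NumberField

/-- A labeling of the embeddings of a number field `K` of degree `3s` with `s` real and `2s`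
complex (non-real) embeddings: an enumeration `σ 0, …, σ (3s-1)` of all field embeddings
`K → ℂ` such that `σ 0, …, σ (s-1)` are exactly the real embeddings and
`σ (2s+j) = conj ∘ σ (s+j)` for `j = 0, …, s-1`.  (Indices are `0`-based.) -/
structure EmbeddingLabeling (K : Type*) [Field K] (s : ℕ) where
  σ : ℕ → (K →+* ℂ)
  inj : ∀ i < 3 * s, ∀ j < 3 * s, σ i = σ j → i = j
  surj : ∀ φ : K →+* ℂ, ∃ i < 3 * s, σ i = φ
  isReal : ∀ i < s, ComplexEmbedding.IsReal (σ i)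
  notReal : ∀ i, s ≤ i → i < 3 * s → ¬ ComplexEmbedding.IsReal (σ i)
  conjRel : ∀ j < s, σ (2 * s + j) = ComplexEmbedding.conjugate (σ (s + j))

/-- A subgroup `U ≤ 𝓞_K^×` is *admissible* if it contains units `u 0, …, u (s-1)` for which
the `s×s` matrix `(log σ_j(u_i))` is nonsingular. -/
def IsAdmissible {K : Type*} [Field K] {s : ℕ}
    (L : EmbeddingLabeling K s) (U : Subgroup (𝓞 K)ˣ) : Prop :=
  ∃ u : Fin s → (𝓞 K)ˣ, (∀ i, u i ∈ U) ∧
    (Matrix.of fun i j : Fin s =>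
      Real.log ((L.σ j (algebraMap (𝓞 K) K (u i))).re)).det ≠ 0

/-- A subgroup `U ≤ 𝓞_K^×` satisfies the *pluriclosed condition* if
`σ_j(u)·|σ_{s+j}(u)|² = 1` for every `u ∈ U` and every `j ∈ {0,…,s-1}`. -/
def IsPluriclosed {K : Type*} [Field K] {s : ℕ}
    (L : EmbeddingLabeling K s) (U : Subgroup (𝓞 K)ˣ) : Prop :=
  ∀ u ∈ U, ∀ j < s, L.σ j (algebraMap (𝓞 K) K (u : (𝓞 K)ˣ)) *
    (‖L.σ (s + j) (algebraMap (𝓞 K) K (u : (𝓞 K)ˣ))‖ : ℂ) ^ 2 = 1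

section Aux

variable {K : Type*} [Field K] [NumberField K] {s : ℕ}

lemma emb_ne_zero' (φ : K →+* ℂ) (u : (𝓞 K)ˣ) :
    φ (algebraMap (𝓞 K) K (u : (𝓞 K)ˣ)) ≠ 0 := by
  simp only [ne_eq, map_eq_zero]
  intro h
  exact (u : (𝓞 K)ˣ).ne_zero
    ((map_eq_zero_iff (algebraMap (𝓞 K) K) NumberField.RingOfIntegers.coe_injective).mp h)

lemma abs_pos' (φ : K →+* ℂ) (u : (𝓞 K)ˣ) :
    0 < ‖φ (algebraMap (𝓞 K) K (u : (𝓞 K)ˣ))‖ :=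
  norm_pos_iff.mpr (emb_ne_zero' φ u)

/-- From the pluriclosed condition: `σ_j(u)` is the real number `r⁻²` where
`r = |σ_{s+j}(u)|`. -/
lemma sigma_eq_real {L : EmbeddingLabeling K s} {U : Subgroup (𝓞 K)ˣ}
    (hpc : IsPluriclosed L U) {u : (𝓞 K)ˣ} (hu : u ∈ U) {j : ℕ} (hj : j < s) :
    L.σ j (algebraMap (𝓞 K) K (u : (𝓞 K)ˣ)) =
      ((((‖L.σ (s + j) (algebraMap (𝓞 K) K (u : (𝓞 K)ˣ))‖) ^ 2)⁻¹ : ℝ) : ℂ) := by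
  have h := hpc u hu j hj
  have hr : (‖L.σ (s + j) (algebraMap (𝓞 K) K (u : (𝓞 K)ˣ))‖ : ℂ) ≠ 0 := by
    exact_mod_cast (abs_pos' _ u).ne'
  field_simp
  push_cast
  field_simp
  linear_combination h

lemma re_pos {L : EmbeddingLabeling K s} {U : Subgroup (𝓞 K)ˣ}
    (hpc : IsPluriclosed L U) {u : (𝓞 K)ˣ} (hu : u ∈ U) {j : ℕ} (hj : j < s) :
    0 < (L.σ j (algebraMap (𝓞 K) K (u : (𝓞 K)ˣ))).re := by
  rw [sigma_eq_real hpc hu hj, Complex.ofReal_re]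
  have hr := abs_pos' (L.σ (s + j)) u
  positivity

/-- `log |σ_j(u)| = log (σ_j(u)).re` for `j < s`. -/
lemma log_abs_low {L : EmbeddingLabeling K s} {U : Subgroup (𝓞 K)ˣ}
    (hpc : IsPluriclosed L U) {u : (𝓞 K)ˣ} (hu : u ∈ U) {j : ℕ} (hj : j < s) :
    Real.log (‖L.σ j (algebraMap (𝓞 K) K (u : (𝓞 K)ˣ))‖) =
      Real.log ((L.σ j (algebraMap (𝓞 K) K (u : (𝓞 K)ˣ))).re) := by
  have hr := abs_pos' (L.σ (s + j)) u
  rw [sigma_eq_real hpc hu hj, Complex.norm_real, Real.norm_eq_abs, Complex.ofReal_re,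
    abs_of_pos (by positivity)]

/-- `log |σ_{s+j}(u)| = -(1/2) log (σ_j(u)).re` for `j < s`. -/
lemma log_abs_mid {L : EmbeddingLabeling K s} {U : Subgroup (𝓞 K)ˣ}
    (hpc : IsPluriclosed L U) {u : (𝓞 K)ˣ} (hu : u ∈ U) {j : ℕ} (hj : j < s) :
    Real.log (‖L.σ (s + j) (algebraMap (𝓞 K) K (u : (𝓞 K)ˣ))‖) =
      -(1/2) * Real.log ((L.σ j (algebraMap (𝓞 K) K (u : (𝓞 K)ˣ))).re) := by
  have hr : 0 < ‖L.σ (s + j) (algebraMap (𝓞 K) K (u : (𝓞 K)ˣ))‖ :=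
    abs_pos' _ u
  rw [sigma_eq_real hpc hu hj, Complex.ofReal_re, Real.log_inv, Real.log_pow]
  push_cast
  ring

lemma log_abs_high {L : EmbeddingLabeling K s} {U : Subgroup (𝓞 K)ˣ}
    (hpc : IsPluriclosed L U) {u : (𝓞 K)ˣ} (hu : u ∈ U) {j : ℕ} (hj : j < s) :
    Real.log (‖L.σ (2 * s + j) (algebraMap (𝓞 K) K (u : (𝓞 K)ˣ))‖) =
      -(1/2) * Real.log ((L.σ j (algebraMap (𝓞 K) K (u : (𝓞 K)ˣ))).re) := by
  rw [L.conjRel j hj, ComplexEmbedding.conjugate_coe_eq, Complex.norm_conj]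
  exact log_abs_mid hpc hu hj

lemma range_three_eq (s : ℕ) :
    Finset.range (3 * s) =
      (Finset.range s).biUnion (fun j => {j, s + j, 2 * s + j}) := by
  ext i
  simp only [Finset.mem_range, Finset.mem_biUnion, Finset.mem_insert, Finset.mem_singleton]
  constructor
  · intro h
    rcases lt_or_ge i s with h1 | h1
    · exact ⟨i, h1, Or.inl rfl⟩
    rcases lt_or_ge i (2 * s) with h2 | h2
    · exact ⟨i - s, by omega, Or.inr (Or.inl (by omega))⟩
    · exact ⟨i - 2 * s, by omega, Or.inr (Or.inr (by omega))⟩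
  · rintro ⟨j, hj, rfl | rfl | rfl⟩ <;> omega

lemma triple_pairwise_disjoint {s : ℕ} {J : Finset ℕ} (hJ : J ⊆ Finset.range s) :
    Set.PairwiseDisjoint (↑J) (fun j => ({j, s + j, 2 * s + j} : Finset ℕ)) := by
  intro a ha b hb hab
  have ha' : a < s := Finset.mem_range.mp (hJ ha)
  have hb' : b < s := Finset.mem_range.mp (hJ hb)
  simp only [Function.onFun, Finset.disjoint_left, Finset.mem_insert, Finset.mem_singleton]
  rintro x (rfl | rfl | rfl) <;> omega

lemma triple_sum {M : Type*} [AddCommMonoid M] {s j : ℕ} (hs : 1 ≤ s) (hj : j < s)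
    (g : ℕ → M) :
    ∑ i ∈ ({j, s + j, 2 * s + j} : Finset ℕ), g i = g j + g (s + j) + g (2 * s + j) := by
  rw [Finset.sum_insert (by simp; omega), Finset.sum_insert (by simp; omega),
    Finset.sum_singleton, add_assoc]

lemma triple_prod {M : Type*} [CommMonoid M] {s j : ℕ} (hs : 1 ≤ s) (hj : j < s)
    (g : ℕ → M) :
    ∏ i ∈ ({j, s + j, 2 * s + j} : Finset ℕ), g i = g j * g (s + j) * g (2 * s + j) := by
  rw [Finset.prod_insert (by simp; omega), Finset.prod_insert (by simp; omega),
    Finset.prod_singleton, mul_assoc]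

end Aux

theorem trivial_relations_iff_triple_union
    (s : ℕ) (hs : 1 ≤ s)
    (K : Type*) [Field K] [NumberField K]
    (hdeg : Module.finrank ℚ K = 3 * s)
    (L : EmbeddingLabeling K s) (U : Subgroup (𝓞 K)ˣ)
    (hadm : IsAdmissible L U) (hpc : IsPluriclosed L U) :
    ∀ I : Finset ℕ, I ⊆ Finset.range (3 * s) →
      ((∀ u ∈ U, ∏ i ∈ I, L.σ i (algebraMap (𝓞 K) K (u : (𝓞 K)ˣ)) = 1) ↔
        ∃ J : Finset ℕ, J ⊆ Finset.range s ∧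
          I = J.biUnion (fun j => {j, s + j, 2 * s + j})) := by
  intro I hI
  constructor
  · -- forward
    intro hprod
    obtain ⟨uu, huU, hdet⟩ := hadm
    classical
    set a : (𝓞 K)ˣ → ℕ → ℝ :=
      fun u j => Real.log ((L.σ j (algebraMap (𝓞 K) K (u : (𝓞 K)ˣ))).re) with ha
    set c : ℕ → ℝ := fun j =>
      (if j ∈ I then (1 : ℝ) else 0) - (if s + j ∈ I then (1/2 : ℝ) else 0)
        - (if 2 * s + j ∈ I then (1/2 : ℝ) else 0) with hc
    -- for each u in U, ∑_{j<s} c j * a u j = 0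
    have key : ∀ u ∈ U, ∑ j ∈ Finset.range s, c j * a u j = 0 := by
      intro u hu
      have h1 : ∑ i ∈ I,
          Real.log (‖L.σ i (algebraMap (𝓞 K) K (u : (𝓞 K)ˣ))‖) = 0 := by
        rw [← Real.log_prod (fun i _ => (abs_pos' _ u).ne'), ← norm_prod,
          hprod u hu, norm_one, Real.log_one]
      set g : ℕ → ℝ := fun i =>
        if i ∈ I then Real.log (‖L.σ i (algebraMap (𝓞 K) K (u : (𝓞 K)ˣ))‖) else 0
        with hg
      have h2 : ∑ i ∈ Finset.range (3 * s), g i = 0 := by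
        rw [hg, Finset.sum_ite_mem, Finset.inter_eq_right.mpr hI, h1]
      rw [range_three_eq s, Finset.sum_biUnion
        (triple_pairwise_disjoint (le_refl _))] at h2
      calc ∑ j ∈ Finset.range s, c j * a u j
          = ∑ j ∈ Finset.range s, ∑ i ∈ ({j, s + j, 2 * s + j} : Finset ℕ), g i := by
            apply Finset.sum_congr rfl
            intro j hj
            have hj' : j < s := Finset.mem_range.mp hj
            rw [triple_sum hs hj' g]
            simp only [hg, hc, ha]
            by_cases h1 : j ∈ I <;> by_cases h2 : s + j ∈ I <;>
              by_cases h3 : 2 * s + j ∈ I <;>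
              simp only [h1, h2, h3, if_true, if_false, log_abs_low hpc hu hj',
                log_abs_mid hpc hu hj', log_abs_high hpc hu hj'] <;> ring
        _ = 0 := h2
    -- conclude c vanishes on range s
    have hczero : ∀ j < s, c j = 0 := by
      have hmv : (Matrix.of fun i j : Fin s =>
          Real.log ((L.σ j (algebraMap (𝓞 K) K (uu i))).re)).mulVec
          (fun j : Fin s => c j) = 0 := by
        funext i
        have := key (uu i) (huU i)
        rw [Finset.sum_range fun j => c j * a (uu i) j] at this
        simpa [Matrix.mulVec, dotProduct, mul_comm] using this
      have := Matrix.eq_zero_of_mulVec_eq_zero hdet hmv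
      intro j hj
      exact congrFun this ⟨j, hj⟩
    -- deduce the membership equivalences
    have hiff : ∀ j < s, (j ∈ I ↔ s + j ∈ I) ∧ (j ∈ I ↔ 2 * s + j ∈ I) := by
      intro j hj
      have h := hczero j hj
      rw [hc] at h
      by_cases h1 : j ∈ I <;> by_cases h2 : s + j ∈ I <;> by_cases h3 : 2 * s + j ∈ I <;>
        simp only [h1, h2, h3, if_true, if_false] at h ⊢ <;> norm_num at h <;> exact ⟨trivial, trivial⟩
    refine ⟨(Finset.range s).filter (· ∈ I), Finset.filter_subset _ _, ?_⟩
    ext i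
    simp only [Finset.mem_biUnion, Finset.mem_filter, Finset.mem_range, Finset.mem_insert,
      Finset.mem_singleton]
    constructor
    · intro hiI
      have hi3 : i < 3 * s := Finset.mem_range.mp (hI hiI)
      rcases lt_or_ge i s with h1 | h1
      · exact ⟨i, ⟨h1, hiI⟩, Or.inl rfl⟩
      rcases lt_or_ge i (2 * s) with h2 | h2
      · refine ⟨i - s, ⟨by omega, ?_⟩, Or.inr (Or.inl (by omega))⟩
        have := (hiff (i - s) (by omega)).1
        have his : s + (i - s) = i := by omega
        rw [his] at this
        exact this.mpr hiI
      · refine ⟨i - 2 * s, ⟨by omega, ?_⟩, Or.inr (Or.inr (by omega))⟩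
        have := (hiff (i - 2 * s) (by omega)).2
        have his : 2 * s + (i - 2 * s) = i := by omega
        rw [his] at this
        exact this.mpr hiI
    · rintro ⟨j, ⟨hj, hjI⟩, rfl | rfl | rfl⟩
      · exact hjI
      · exact ((hiff j hj).1).mp hjI
      · exact ((hiff j hj).2).mp hjI
  · -- backward
    rintro ⟨J, hJ, rfl⟩
    intro u hu
    rw [Finset.prod_biUnion (triple_pairwise_disjoint hJ)]
    apply Finset.prod_eq_one
    intro j hj
    have hj' : j < s := Finset.mem_range.mp (hJ hj)
    rw [triple_prod hs hj' (fun i => L.σ i (algebraMap (𝓞 K) K (u : (𝓞 K)ˣ)))]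
    rw [L.conjRel j hj', ComplexEmbedding.conjugate_coe_eq]
    have h := hpc u hu j hj'
    rw [mul_assoc, Complex.mul_conj, ← Complex.sq_norm]
    calc L.σ j (algebraMap (𝓞 K) K (u : (𝓞 K)ˣ)) *
        ((‖L.σ (s + j) (algebraMap (𝓞 K) K (u : (𝓞 K)ˣ))‖ ^ 2 : ℝ) : ℂ)
        = L.σ j (algebraMap (𝓞 K) K (u : (𝓞 K)ˣ)) *
          ((‖L.σ (s + j) (algebraMap (𝓞 K) K (u : (𝓞 K)ˣ))‖ : ℂ)) ^ 2 := by
          push_cast; ring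
      _ = 1 := h
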